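/- arXiv:2210.04166 — 2 statements merged into one kernel-verified Lean document; each statement's English description precedes it below -/
import Mathlib

section
/- If (x₁,y₁),...,(x_{n+1},y_{n+1}) are i.i.d. (or exchangeable) random pairs, and s_i = s(x_i, y_i) are their conformity scores, then for τ* defined as the ⌈(1-α)(n+1)⌉-th smallest value among s₁,...,s_n, the probability that s_{n+1} ≤ τ* is at least 1 - α. -/
/-!
For each index `j`, swap the score `s_j` into the test position and ask whether it is covered.
Whatever the scores, every score with fewer than `k = ⌈(1-α)(n+1)⌉` others strictly below it is
covered, and at least `k` scores have this property. By exchangeability all `n + 1` swapped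
events have the probability of the original one, so `(n + 1) ℙ(covered) ≥ k ≥ (1 - α)(n + 1)`.
-/

open MeasureTheory

/-- The `k`-th smallest value (1-indexed) among the entries of `v`. -/
noncomputable def kthSmallest {n : ℕ} (v : Fin n → ℝ) (k : ℕ) : ℝ :=
  (((List.ofFn v).insertionSort (· ≤ ·)).getD (k - 1) 0)

open Finset ENNReal

namespace List

variable {α : Type*}

theorem countP_ofFn {m : ℕ} (v : Fin m → α) (p : α → Prop) [DecidablePred p] :
    (ofFn v).countP p = #{i | p (v i)} := by
  rw [← Multiset.coe_countP, ← Fin.univ_val_map, Multiset.countP_map, card_def, filter_val]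

theorem Pairwise.lt_countP_iff [Preorder α] {l : List α} (hl : l.Pairwise (· ≤ ·))
    {p : α → Prop} [DecidablePred p] (hp : ∀ ⦃a b⦄, a ≤ b → p b → p a) {k : ℕ}
    (hk : k < l.length) : p l[k] ↔ k < l.countP p := by
  have hle : ∀ i j (hi : i < l.length) (hj : j < l.length), i ≤ j → l[i] ≤ l[j] := by
    intro i j hi hj hij
    rcases hij.eq_or_lt with rfl | hij
    · exact le_rfl
    · exact pairwise_iff_getElem.1 hl i j hi hj hij
  constructor
  · intro hpk
    have htake : (l.take (k + 1)).countP p = k + 1 := by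
      rw [countP_eq_length.2, length_take_of_le hk]
      intro a ha
      obtain ⟨i, hi, rfl⟩ := mem_iff_getElem.1 ha
      simp only [length_take] at hi
      simpa [getElem_take] using hp (hle i k _ hk (by omega)) hpk
    have := (take_sublist (k + 1) l).countP_le (p := (p ·))
    omega
  · intro hcount
    by_contra hpk
    have hdrop : (l.drop k).countP p = 0 := by
      rw [countP_eq_zero]
      intro a ha hpa
      obtain ⟨i, hi, rfl⟩ := mem_iff_getElem.1 ha
      simp only [length_drop] at hi
      exact hpk (hp (hle k (k + i) hk (by omega) (by omega)) (by simpa using hpa))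
    have := (l.take k).countP_le_length (p := (p ·))
    rw [length_take] at this
    rw [← take_append_drop k l, countP_append, hdrop] at hcount
    omega

end List

section kthSmallest

variable {m k : ℕ} (v : Fin m → ℝ)

theorem pred_kthSmallest_iff (hk1 : 1 ≤ k) (hkm : k ≤ m) {p : ℝ → Prop} [DecidablePred p]
    (hp : ∀ ⦃a b⦄, a ≤ b → p b → p a) : p (kthSmallest v k) ↔ k ≤ #{i | p (v i)} := by
  have hperm := List.perm_insertionSort (· ≤ ·) (List.ofFn v)
  have hlen : k - 1 < ((List.ofFn v).insertionSort (· ≤ ·)).length := by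
    rw [List.length_insertionSort, List.length_ofFn]; omega
  rw [kthSmallest, List.getD_eq_getElem _ _ hlen,
    (List.pairwise_insertionSort _ _).lt_countP_iff hp hlen, hperm.countP_eq, List.countP_ofFn]
  omega

theorem kthSmallest_le_iff (hk1 : 1 ≤ k) (hkm : k ≤ m) (t : ℝ) :
    kthSmallest v k ≤ t ↔ k ≤ #{i | v i ≤ t} :=
  pred_kthSmallest_iff v hk1 hkm fun _ _ hab hb => hab.trans hb

theorem le_kthSmallest_iff (hk1 : 1 ≤ k) (hkm : k ≤ m) (t : ℝ) :
    t ≤ kthSmallest v k ↔ #{i | v i < t} < k := by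
  rw [← not_lt, pred_kthSmallest_iff v hk1 hkm fun _ _ hab hb => hab.trans_lt hb, not_le]

theorem le_card_filter_card_lt_lt (hk1 : 1 ≤ k) (hkm : k ≤ m) :
    k ≤ #{j | #{i | v i < v j} < k} := by
  set t := kthSmallest v k
  have hbelow : #{i | v i < t} < k := (le_kthSmallest_iff v hk1 hkm t).1 le_rfl
  refine ((kthSmallest_le_iff v hk1 hkm t).1 le_rfl).trans (card_le_card fun j hj => ?_)
  simp only [mem_filter, mem_univ, true_and] at hj ⊢
  refine (card_le_card fun i hi => ?_).trans_lt hbelow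
  simp only [mem_filter, mem_univ, true_and] at hi ⊢
  exact hi.trans_le hj

theorem measurable_kthSmallest (hk1 : 1 ≤ k) (hkm : k ≤ m) :
    Measurable fun v : Fin m → ℝ => kthSmallest v k := by
  refine measurable_of_Iic fun t => ?_
  have hcard : Measurable fun v : Fin m → ℝ => #{i | v i ≤ t} := by
    simp only [card_filter]
    exact Finset.measurable_sum _ fun i _ =>
      Measurable.ite (measurableSet_le (measurable_pi_apply i) measurable_const)
        measurable_const measurable_const
  have : (fun v : Fin m → ℝ => kthSmallest v k) ⁻¹' Set.Iic t =
      (fun v : Fin m → ℝ => #{i | v i ≤ t}) ⁻¹' Set.Ici k := by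
    ext v
    exact kthSmallest_le_iff v hk1 hkm t
  rw [this]
  exact hcard measurableSet_Ici

end kthSmallest

def coverageEvent (n k : ℕ) : Set (Fin (n + 1) → ℝ) :=
  {w | w (Fin.last n) ≤ kthSmallest (fun i : Fin n => w i.castSucc) k}

section coverageEvent

variable {n k : ℕ}

theorem measurableSet_coverageEvent (hk1 : 1 ≤ k) (hkn : k ≤ n) :
    MeasurableSet (coverageEvent n k) :=
  measurableSet_le (measurable_pi_apply _) <|
    (measurable_kthSmallest hk1 hkn).comp (by fun_prop)

open scoped Classical in
theorem le_card_filter_comp_swap_mem_coverageEvent (w : Fin (n + 1) → ℝ) (hk1 : 1 ≤ k)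
    (hkn : k ≤ n) : k ≤ #{j | w ∘ Equiv.swap j (Fin.last n) ∈ coverageEvent n k} := by
  refine (le_card_filter_card_lt_lt w hk1 (by omega)).trans (card_le_card fun j hj => ?_)
  simp only [mem_filter, mem_univ, true_and] at hj ⊢
  simp only [coverageEvent, Set.mem_ofPred_eq, Function.comp_apply, Equiv.swap_apply_right]
  rw [le_kthSmallest_iff _ hk1 hkn]
  refine lt_of_le_of_lt (card_le_card_of_injOn (fun i => Equiv.swap j (Fin.last n) i.castSucc)
    (fun i hi => ?_) ((Equiv.injective _).comp (Fin.castSucc_injective n)).injOn) hj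
  simpa using hi

end coverageEvent

open scoped Classical in
theorem natCast_mul_measure_univ_le_sum_measure {X ι : Type*} [MeasurableSpace X] [Fintype ι]
    (μ : Measure X) {B : ι → Set X} (hB : ∀ j, MeasurableSet (B j)) {k : ℕ}
    (hk : ∀ x, k ≤ #{j | x ∈ B j}) : k * μ Set.univ ≤ ∑ j, μ (B j) :=
  calc k * μ Set.univ = ∫⁻ _, (k : ℝ≥0∞) ∂μ := (lintegral_const _).symm
    _ ≤ ∫⁻ x, ∑ j, (B j).indicator 1 x ∂μ := lintegral_mono fun x => by
        simp only [Set.indicator_apply, Pi.one_apply, sum_boole]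
        exact_mod_cast hk x
    _ = ∑ j, μ (B j) := by
        rw [lintegral_finsetSum _ fun j _ => measurable_one.indicator (hB j)]
        simp only [lintegral_indicator_one (hB _)]

theorem measure_map_preimage_comp_perm {Ω ι β : Type*} [MeasurableSpace Ω] [MeasurableSpace β]
    {μ : Measure Ω} {f : Ω → ι → β} (hf : Measurable f) {σ : Equiv.Perm ι}
    (hσ : μ.map f = μ.map fun ω => f ω ∘ σ) {E : Set (ι → β)} (hE : MeasurableSet E) :
    μ.map f ((· ∘ σ) ⁻¹' E) = μ.map f E := by
  have hcomp : Measurable fun w : ι → β => w ∘ σ := by fun_prop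
  rw [← Measure.map_apply hcomp hE, Measure.map_map hcomp hf, hσ]
  rfl

/-- conformal coverage lower bound. If `(x_i, y_i)`, `i = 1, …, n+1` are
exchangeable and `s_i = s(x_i, y_i)` are their conformity scores, then for `τ*` the
`⌈(1-α)(n+1)⌉`-th smallest value among `s_1, …, s_n`, one has `P(s_{n+1} ≤ τ*) ≥ 1 - α`. -/
theorem conformal_coverage_lower_bound {Ω : Type*} [MeasurableSpace Ω]
    (ℙ : Measure Ω) [IsProbabilityMeasure ℙ]
    (n : ℕ) (α : ℝ) (hα : α ∈ Set.Ioo (0 : ℝ) 1)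
    (s : Fin (n + 1) → Ω → ℝ) (hmeas : ∀ i, Measurable (s i))
    (hexch : ∀ σ : Equiv.Perm (Fin (n + 1)),
      Measure.map (fun ω => fun i => s i ω) ℙ = Measure.map (fun ω => fun i => s (σ i) ω) ℙ)
    (hn : (1 - α) * (n + 1) ≤ n) :
    ENNReal.ofReal (1 - α) ≤
      ℙ {ω | s (Fin.last n) ω ≤
        kthSmallest (fun i : Fin n => s i.castSucc ω) (Nat.ceil ((1 - α) * (n + 1)))} := by
  set k := ⌈(1 - α) * (n + 1)⌉₊
  have hk1 : 1 ≤ k := Nat.one_le_ceil_iff.2 (mul_pos (by linarith [hα.2]) (by positivity))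
  have hkn : k ≤ n := Nat.ceil_le.2 hn
  set f : Ω → Fin (n + 1) → ℝ := fun ω i => s i ω
  have hf : Measurable f := measurable_pi_lambda _ hmeas
  have : IsProbabilityMeasure (ℙ.map f) := Measure.isProbabilityMeasure_map hf.aemeasurable
  have hE := measurableSet_coverageEvent hk1 hkn
  have hcount : (k : ℝ≥0∞) ≤ (n + 1) * ℙ.map f (coverageEvent n k) := by
    simpa [measure_map_preimage_comp_perm hf (hexch _) hE] using
      natCast_mul_measure_univ_le_sum_measure (ℙ.map f)
        (B := fun j => (· ∘ Equiv.swap j (Fin.last n)) ⁻¹' coverageEvent n k)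
        (fun _ => measurable_pi_lambda _ (fun _ => measurable_pi_apply _) hE)
        (le_card_filter_comp_swap_mem_coverageEvent · hk1 hkn)
  have hceil : ENNReal.ofReal (1 - α) * (n + 1) ≤ k := by
    have h := ENNReal.ofReal_le_ofReal (Nat.le_ceil ((1 - α) * (n + 1)))
    rw [ENNReal.ofReal_mul (by linarith [hα.2])] at h
    simpa [ENNReal.ofReal_add] using h
  calc ENNReal.ofReal (1 - α) ≤ ℙ.map f (coverageEvent n k) := by
        rw [← ENNReal.mul_le_mul_iff_right (a := n + 1) (by positivity) (by simp), mul_comm]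
        exact hceil.trans hcount
    _ = _ := Measure.map_apply hf hE
end

section
/- In the binary toy model, the classifier f with weights w_inv > 0 and w_sp = 0 minimizes the misclassification probability P_{(x,y)∼P_p}[sign(w^T x) ≠ y] over all weight vectors w ∈ ℝ², simultaneously for every spurious correlation parameter p ∈ [0,1]. -/
open MeasureTheory ProbabilityTheory
open scoped ENNReal

/-- Uniform probability measure on the interval `[a, b]`. -/
noncomputable def unifI (a b : ℝ) : Measure ℝ := (volume : Measure ℝ)[|Set.Icc a b]

/-- Law of the spurious feature given label `yv`: equals `yv` with probability `p`
and `-yv` with probability `1 - p`. -/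
noncomputable def spur (p yv : ℝ) : Measure ℝ :=
  ENNReal.ofReal p • Measure.dirac yv + ENNReal.ofReal (1 - p) • Measure.dirac (-yv)

/-- The toy-model distribution `P_p` of `(x_inv, x_sp, y)`: `y` uniform on `{-1, 1}`;
given `y = 1`, `x_inv ~ U[γ, c]`; given `y = -1`, `x_inv ~ U[-c, -γ]`;
`x_sp = y` with probability `p`, independent of `x_inv` given `y`. -/
noncomputable def toy (γ c p : ℝ) : Measure (ℝ × ℝ × ℝ) :=
  (1 / 2 : ℝ≥0∞) •
      Measure.map (fun z : ℝ × ℝ => (z.1, z.2, (1 : ℝ))) ((unifI γ c).prod (spur p 1))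
    + (1 / 2 : ℝ≥0∞) •
      Measure.map (fun z : ℝ × ℝ => (z.1, z.2, (-1 : ℝ))) ((unifI (-c) (-γ)).prod (spur p (-1)))

/-- Misclassification probability of the linear classifier `x ↦ sign(w ⬝ x)` under `P_p`. -/
noncomputable def errProb (γ c p : ℝ) (w : ℝ × ℝ) : ℝ≥0∞ :=
  toy γ c p {z | Real.sign (w.1 * z.1 + w.2 * z.2.1) ≠ z.2.2}

/-- Maximum softmax confidence of the logistic classifier with weights `w` at input `x`. -/
noncomputable def conf (w x : ℝ × ℝ) : ℝ :=
  max (1 / (1 + Real.exp (w.1 * x.1 + w.2 * x.2)))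
      (Real.exp (w.1 * x.1 + w.2 * x.2) / (1 + Real.exp (w.1 * x.1 + w.2 * x.2)))

/-- Softmax probability the logistic classifier assigns to the true label of `z`. -/
noncomputable def fscore (w : ℝ × ℝ) (z : ℝ × ℝ × ℝ) : ℝ :=
  if z.2.2 = 1 then
    Real.exp (w.1 * z.1 + w.2 * z.2.1) / (1 + Real.exp (w.1 * z.1 + w.2 * z.2.1))
  else 1 / (1 + Real.exp (w.1 * z.1 + w.2 * z.2.1))

/-- TPS miscoverage event at threshold `τ`: the true label is not in
`C^TPS(x, τ) = {ℓ : f_ℓ(x) ≥ 1 - τ}`. -/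
def miscover (w : ℝ × ℝ) (τ : ℝ) : Set (ℝ × ℝ × ℝ) := {z | fscore w z < 1 - τ}

/-! Because `γ ≥ 0`, the label `y` equals `sign x_inv` almost surely under `P_p` (the point
`x_inv = 0` is Lebesgue-null), so the invariant classifier `sign (w_inv x_inv)` errs with
probability zero, which no classifier can beat. -/

theorem Real.measurable_sign : Measurable Real.sign :=
  Measurable.ite measurableSet_Iio measurable_const
    (Measurable.ite measurableSet_Ioi measurable_const measurable_const)

theorem Real.sign_mul_of_pos {a : ℝ} (ha : 0 < a) (x : ℝ) : Real.sign (a * x) = Real.sign x := by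
  rcases lt_trichotomy x 0 with hx | rfl | hx
  · rw [Real.sign_of_neg hx, Real.sign_of_neg (mul_neg_of_pos_of_neg ha hx)]
  · rw [mul_zero]
  · rw [Real.sign_of_pos hx, Real.sign_of_pos (mul_pos ha hx)]

instance (p y : ℝ) : SFinite (spur p y) := by
  unfold spur
  infer_instance

lemma unifI_ae_mem_Icc_ne (a b t : ℝ) : ∀ᵐ x ∂unifI a b, x ∈ Set.Icc a b ∧ x ≠ t :=
  (ae_cond_mem measurableSet_Icc).and (cond_absolutelyContinuous.ae_le (Measure.ae_ne volume t))

lemma unifI_ae_sign_eq_one {a : ℝ} (ha : 0 ≤ a) (b : ℝ) : ∀ᵐ x ∂unifI a b, Real.sign x = 1 :=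
  (unifI_ae_mem_Icc_ne a b 0).mono fun _ ⟨hx, hx0⟩ =>
    Real.sign_of_pos (lt_of_le_of_ne (ha.trans hx.1) hx0.symm)

lemma unifI_ae_sign_eq_neg_one (a : ℝ) {b : ℝ} (hb : b ≤ 0) :
    ∀ᵐ x ∂unifI a b, Real.sign x = -1 :=
  (unifI_ae_mem_Icc_ne a b 0).mono fun _ ⟨hx, hx0⟩ =>
    Real.sign_of_neg (lt_of_le_of_ne (hx.2.trans hb) hx0)

lemma ae_sign_eq_label_map_prod {μ ν : Measure ℝ} [SFinite ν] {y : ℝ}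
    (h : ∀ᵐ x ∂μ, Real.sign x = y) :
    ∀ᵐ z ∂(μ.prod ν).map (fun z : ℝ × ℝ => (z.1, z.2, y)), Real.sign z.1 = z.2.2 :=
  (ae_map_iff (by fun_prop)
    (measurableSet_eq_fun (Real.measurable_sign.comp measurable_fst) (by fun_prop))).2
    (Measure.quasiMeasurePreserving_fst.ae h)

lemma toy_ae_sign_eq_label {γ : ℝ} (hγ : 0 ≤ γ) (c p : ℝ) :
    ∀ᵐ z ∂toy γ c p, Real.sign z.1 = z.2.2 := by
  rw [toy, ae_add_measure_iff]
  exact ⟨Measure.ae_smul_measure (ae_sign_eq_label_map_prod (unifI_ae_sign_eq_one hγ c)) _,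
    Measure.ae_smul_measure
      (ae_sign_eq_label_map_prod (unifI_ae_sign_eq_neg_one (-c) (neg_nonpos.2 hγ))) _⟩

lemma errProb_invariant_eq_zero {γ : ℝ} (hγ : 0 ≤ γ) (c p : ℝ) {winv : ℝ} (hwinv : 0 < winv) :
    errProb γ c p (winv, 0) = 0 :=
  ae_iff.1 <| (toy_ae_sign_eq_label hγ c p).mono fun z hz => by
    simpa [Real.sign_mul_of_pos hwinv] using hz

theorem invariant_classifier_optimal_general (γ c : ℝ) (hγ : 0 ≤ γ) (p : ℝ)
    (winv : ℝ) (hwinv : 0 < winv) (w : ℝ × ℝ) :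
    errProb γ c p (winv, 0) ≤ errProb γ c p w := by
  rw [errProb_invariant_eq_zero hγ c p hwinv]
  exact zero_le

/-- the classifier with `w_inv > 0` and `w_sp = 0` minimizes the
misclassification probability over all weight vectors `w ∈ ℝ²`, simultaneously for
every spurious correlation parameter `p ∈ [0, 1]`. -/
theorem invariant_classifier_optimal (γ c : ℝ) (hγ : 0 ≤ γ) (hc : γ < c)
    (p : ℝ) (hp : p ∈ Set.Icc (0 : ℝ) 1)
    (winv : ℝ) (hwinv : 0 < winv) (w : ℝ × ℝ) :
    errProb γ c p (winv, 0) ≤ errProb γ c p w :=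
  invariant_classifier_optimal_general γ c hγ p winv hwinv w
end
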